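/- arXiv:1404.6331 — 3 statements merged into one kernel-verified Lean document; each statement's English description precedes it below -/
import Mathlib

section
/- Let X and X_a be {0,1}-valued random variables with an arbitrary joint distribution such that X ~ Bernoulli(P) and Pr(X_a ≠ X) ≤ N' for some 0 ≤ N' ≤ 1/2, and let Z ~ Bernoulli(N) with 0 ≤ N ≤ 1/2 be independent of (X, X_a). Set Y = X_a ⊕ Z. Then I(X; Y) ≥ h(P) − h(N ∗ N'). -/
/-!
`I(X;Y) = H(X) − H(X|Y)` and `H(X) = h(P)`. The conditional entropy of the bit `X` given `Y` is
the `Pr(Y = y)`-average of `h(Pr(X ≠ y | Y = y))`, so by concavity of `h` it is at most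
`h(Pr(X ≠ Y))` (binary Fano). Because `Z` is independent of `(X, X_a)`,
`Pr(X ≠ Y) = N ∗ Pr(X ≠ X_a) ≤ N ∗ N' ≤ 1/2`, and `h` is increasing on `[0, 1/2]`.
-/

open scoped BigOperators

noncomputable section

/-- `p` is a probability mass function on the finite type `α`. -/
def IsPMF {α : Type} [Fintype α] (p : α → ℝ) : Prop :=
  (∀ a, 0 ≤ p a) ∧ ∑ a, p a = 1

/-- Shannon entropy (in bits) of a pmf on a finite type. -/
def ent {α : Type} [Fintype α] (p : α → ℝ) : ℝ :=
  ∑ a, -(p a * Real.logb 2 (p a))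

/-- Mutual information (in bits) `I(A;B)` of a joint pmf on `α × β`. -/
def mutInfo {α β : Type} [Fintype α] [Fintype β] (p : α × β → ℝ) : ℝ :=
  ∑ z : α × β, p z * Real.logb 2 (p z / ((∑ b, p (z.1, b)) * (∑ a, p (a, z.2))))

/-- Conditional entropy `H(A|B)` (in bits) of a joint pmf on `α × β`,
via `H(A|B) = H(A,B) − H(B)`. -/
def condEnt {α β : Type} [Fintype α] [Fintype β] (p : α × β → ℝ) : ℝ :=
  ent p - ent (fun b => ∑ a, p (a, b))

/-- The binary entropy function `h`. -/
def hb (x : ℝ) : ℝ := -(x * Real.logb 2 x) - (1 - x) * Real.logb 2 (1 - x)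

/-- Binary convolution `α ∗ β = α(1−β) + β(1−α)`. -/
def conv (a b : ℝ) : ℝ := a * (1 - b) + b * (1 - a)

/-- The Bernoulli pmf on `Bool` with parameter `t`. -/
def bern (t : ℝ) : Bool → ℝ := fun b => if b then t else 1 - t

open Real

lemma neg_mul_logb_two (x : ℝ) : -(x * logb 2 x) = negMulLog x / log 2 := by
  rw [negMulLog, logb]; ring

lemma hb_eq_binEntropy (x : ℝ) : hb x = binEntropy x / log 2 := by
  rw [hb, binEntropy_eq_negMulLog_add_negMulLog_one_sub, add_div, ← neg_mul_logb_two,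
    ← neg_mul_logb_two]
  ring

lemma hb_monotoneOn : MonotoneOn hb (Set.Icc 0 (1 / 2)) := by
  intro x hx y hy hxy
  rw [hb_eq_binEntropy, hb_eq_binEntropy]
  rw [one_div] at hx hy
  gcongr
  exact binEntropy_strictMonoOn.monotoneOn hx hy hxy

lemma hb_concaveOn : ConcaveOn ℝ (Set.Icc 0 1) hb := by
  have hb_eq : hb = fun x => (log 2)⁻¹ • binEntropy x := by
    ext x; rw [hb_eq_binEntropy, smul_eq_mul, inv_mul_eq_div]
  rw [hb_eq]
  exact strictConcave_binEntropy.concaveOn.smul (inv_nonneg.2 (log_pos one_lt_two).le)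

lemma ent_bern (t : ℝ) : ent (bern t) = hb t := by
  rw [ent, Fintype.sum_bool, hb]
  simp only [bern, Bool.false_eq_true, if_true, if_false]
  ring

lemma neg_mul_logb_mul_add (s t : ℝ) :
    -(s * t * logb 2 (s * t)) + -(s * (1 - t) * logb 2 (s * (1 - t)))
      = -(s * logb 2 s) + s * hb t := by
  simp only [neg_mul_logb_two, hb_eq_binEntropy, binEntropy_eq_negMulLog_add_negMulLog_one_sub,
    negMulLog_mul]
  ring

lemma neg_mul_logb_add_neg_mul_logb {u v : ℝ} (hu : 0 ≤ u) (hv : 0 ≤ v) :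
    -(u * logb 2 u) + -(v * logb 2 v)
      = -((u + v) * logb 2 (u + v)) + (u + v) * hb (u / (u + v)) := by
  rcases (add_nonneg hu hv).eq_or_lt with hs | hs
  · obtain ⟨rfl, rfl⟩ : u = 0 ∧ v = 0 := ⟨by linarith, by linarith⟩
    simp
  · have hu' : (u + v) * (u / (u + v)) = u := by field_simp
    have hv' : (u + v) * (1 - u / (u + v)) = v := by field_simp; ring
    rw [← neg_mul_logb_mul_add, hu', hv']

lemma mul_logb_div_mul {x y w : ℝ} (hx : 0 ≤ x) (hy : x ≤ y) (hw : x ≤ w) :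
    x * logb 2 (x / (y * w)) = x * logb 2 x - x * logb 2 y - x * logb 2 w := by
  rcases hx.eq_or_lt with rfl | hx
  · simp
  · rw [logb_div hx.ne' (mul_pos (hx.trans_le hy) (hx.trans_le hw)).ne',
      logb_mul (hx.trans_le hy).ne' (hx.trans_le hw).ne']
    ring

section
variable {α β : Type} [Fintype α] [Fintype β]

lemma mutInfo_eq_ent_sub_condEnt {q : α × β → ℝ} (hq : ∀ z, 0 ≤ q z) :
    mutInfo q = ent (fun a => ∑ b, q (a, b)) - condEnt q := by
  have hle_fst (a : α) (b : β) : q (a, b) ≤ ∑ b', q (a, b') :=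
    Finset.single_le_sum (fun b' _ => hq (a, b')) (Finset.mem_univ b)
  have hle_snd (a : α) (b : β) : q (a, b) ≤ ∑ a', q (a', b) :=
    Finset.single_le_sum (fun a' _ => hq (a', b)) (Finset.mem_univ a)
  have hsplit : mutInfo q = ∑ z, q z * logb 2 (q z)
      - ∑ z : α × β, q z * logb 2 (∑ b, q (z.1, b))
      - ∑ z : α × β, q z * logb 2 (∑ a, q (a, z.2)) := by
    rw [mutInfo, ← Finset.sum_sub_distrib, ← Finset.sum_sub_distrib]
    exact Finset.sum_congr rfl fun z _ =>
      mul_logb_div_mul (hq z) (hle_fst z.1 z.2) (hle_snd z.1 z.2)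
  have hfst : ∑ z : α × β, q z * logb 2 (∑ b, q (z.1, b))
      = ∑ a, (∑ b, q (a, b)) * logb 2 (∑ b, q (a, b)) := by
    rw [Fintype.sum_prod_type]; simp only [Finset.sum_mul]
  have hsnd : ∑ z : α × β, q z * logb 2 (∑ a, q (a, z.2))
      = ∑ b, (∑ a, q (a, b)) * logb 2 (∑ a, q (a, b)) := by
    rw [Fintype.sum_prod_type_right]; simp only [Finset.sum_mul]
  rw [hsplit, hfst, hsnd, condEnt, ent, ent, ent]
  simp only [Finset.sum_neg_distrib]
  ring

lemma condEnt_eq_sum_mul_hb {q : Bool × β → ℝ} (hq : ∀ z, 0 ≤ q z) (g : β → Bool) :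
    condEnt q = ∑ b, (∑ a, q (a, b)) * hb (q (!g b, b) / ∑ a, q (a, b)) := by
  have hpair (f : Bool → ℝ) (x : Bool) : ∑ a, f a = f (!x) + f x := by
    cases x <;> simp [add_comm]
  rw [condEnt, ent, ent, Fintype.sum_prod_type_right, ← Finset.sum_sub_distrib]
  refine Finset.sum_congr rfl fun b _ => ?_
  simp only [hpair _ (g b)]
  linarith [neg_mul_logb_add_neg_mul_logb (hq (!g b, b)) (hq (g b, b))]

/-- Fano's inequality for a bit `X` guessed from `Y` by `g`. -/
lemma condEnt_le_hb_error {q : Bool × β → ℝ} (hq : IsPMF q) (g : β → Bool) :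
    condEnt q ≤ hb (∑ b, q (!g b, b)) := by
  obtain ⟨hq0, hq1⟩ := hq
  set m : β → ℝ := fun b => ∑ a, q (a, b)
  have hle (b : β) : q (!g b, b) ≤ m b :=
    Finset.single_le_sum (fun a _ => hq0 (a, b)) (Finset.mem_univ _)
  have hmul (b : β) : m b * (q (!g b, b) / m b) = q (!g b, b) := by
    rcases (hq0 _).eq_or_lt with h0 | hpos
    · rw [← h0, zero_div, mul_zero]
    · exact mul_div_cancel₀ _ (hpos.trans_le (hle b)).ne'
  have hmem (b : β) : q (!g b, b) / m b ∈ Set.Icc (0 : ℝ) 1 :=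
    ⟨div_nonneg (hq0 _) ((hq0 _).trans (hle b)), div_le_one_of_le₀ (hle b) ((hq0 _).trans (hle b))⟩
  have hm1 : ∑ b, m b = 1 := by rw [← hq1, Fintype.sum_prod_type_right]
  have hjensen := hb_concaveOn.le_map_sum (t := Finset.univ) (w := m)
    (p := fun b => q (!g b, b) / m b)
    (fun b _ => Finset.sum_nonneg fun a _ => hq0 (a, b)) hm1 (fun b _ => hmem b)
  simp only [smul_eq_mul, hmul] at hjensen
  rwa [condEnt_eq_sum_mul_hb hq0 g]
end

lemma conv_le_conv_right {a b c : ℝ} (ha : a ≤ 1 / 2) (hbc : b ≤ c) : conv a b ≤ conv a c := by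
  unfold conv; nlinarith

lemma conv_le_half {a b : ℝ} (ha : a ≤ 1 / 2) (hb : b ≤ 1 / 2) : conv a b ≤ 1 / 2 := by
  unfold conv
  nlinarith [mul_nonneg (by linarith : (0 : ℝ) ≤ 1 - 2 * a) (by linarith : (0 : ℝ) ≤ 1 - 2 * b)]

/-- The joint pmf of `(X, X_a ⊕ Z)` when `(X, X_a) ∼ p` and `Z ∼ Bernoulli(N)` is independent. -/
def bscJoint {α : Type} (N : ℝ) (p : α × Bool → ℝ) : α × Bool → ℝ :=
  fun xy => ∑ xa : Bool, p (xy.1, xa) * (if xy.2 = xa then 1 - N else N)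

section
variable {α : Type} {N : ℝ} {p : α × Bool → ℝ}

lemma sum_bscJoint_fst (a : α) : ∑ y, bscJoint N p (a, y) = ∑ b, p (a, b) := by
  have hrow (b : Bool) : ∑ y : Bool, (if y = b then 1 - N else N) = 1 := by
    cases b <;> simp
  simp only [bscJoint, Finset.sum_comm (γ := Bool) (α := Bool), ← Finset.mul_sum, hrow, mul_one]

lemma isPMF_bscJoint [Fintype α] (hp : IsPMF p) (hN0 : 0 ≤ N) (hN1 : N ≤ 1) :
    IsPMF (bscJoint N p) := by
  refine ⟨fun z => Finset.sum_nonneg fun b _ => mul_nonneg (hp.1 _) ?_, ?_⟩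
  · split_ifs <;> linarith
  · rw [Fintype.sum_prod_type]
    simp only [sum_bscJoint_fst]
    rw [← Fintype.sum_prod_type, hp.2]

end

lemma sum_bscJoint_not_eq_conv {N : ℝ} {p : Bool × Bool → ℝ} (hp : ∑ z, p z = 1) :
    ∑ b, bscJoint N p (!b, b) = conv N (∑ z : Bool × Bool, if z.2 = z.1 then 0 else p z) := by
  simp only [bscJoint, conv, Fintype.sum_prod_type, Fintype.sum_bool, Bool.not_true,
    Bool.not_false] at hp ⊢
  norm_num
  linear_combination N * hp

theorem mutInfo_ge_of_flip_le_general (P N' N : ℝ)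
    (hN' : N' ≤ 1 / 2) (hN0 : 0 ≤ N) (hN : N ≤ 1 / 2)
    (p : Bool × Bool → ℝ) (hp : IsPMF p)
    (hX : ∑ b, p (true, b) = P)
    (hflip : ∑ z : Bool × Bool, (if z.2 = z.1 then 0 else p z) ≤ N') :
    hb P - hb (conv N N')
      ≤ mutInfo (fun xy : Bool × Bool =>
          ∑ xa : Bool, p (xy.1, xa) * (if xy.2 = xa then 1 - N else N)) := by
  change _ ≤ mutInfo (bscJoint N p)
  have hr : IsPMF (bscJoint N p) := isPMF_bscJoint hp hN0 (by linarith)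
  have hX' : ∑ b, p (false, b) = 1 - P := by
    have := hp.2
    rw [Fintype.sum_prod_type, Fintype.sum_bool, hX] at this
    linarith
  have hmarg : (fun x => ∑ y, bscJoint N p (x, y)) = bern P := by
    funext x
    rw [sum_bscJoint_fst]
    cases x
    exacts [hX', hX]
  set ε := ∑ z : Bool × Bool, (if z.2 = z.1 then 0 else p z)
  have herr : ∑ b, bscJoint N p (!b, b) = conv N ε := sum_bscJoint_not_eq_conv hp.2
  have he0 : 0 ≤ conv N ε := herr ▸ Finset.sum_nonneg fun b _ => hr.1 (!b, b)
  have hle : conv N ε ≤ conv N N' := conv_le_conv_right hN hflip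
  have hfano : condEnt (bscJoint N p) ≤ hb (conv N ε) := herr ▸ condEnt_le_hb_error hr id
  have hmono : hb (conv N ε) ≤ hb (conv N N') := hb_monotoneOn
    ⟨he0, hle.trans (conv_le_half hN hN')⟩ ⟨he0.trans hle, conv_le_half hN hN'⟩ hle
  rw [mutInfo_eq_ent_sub_condEnt hr.1, hmarg, ent_bern]
  linarith

/-- Let `X, X_a` be bits with an arbitrary joint pmf `p` such that
`X ∼ Bernoulli(P)` and `Pr(X_a ≠ X) ≤ N' ≤ 1/2`, and let `Z ∼ Bernoulli(N)`
(`N ≤ 1/2`) be independent of `(X, X_a)`; set `Y = X_a ⊕ Z` (so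
`Pr(Y = y | X_a = a) = 1 − N` if `y = a` and `N` otherwise).  Then
`I(X;Y) ≥ h(P) − h(N ∗ N')`. -/
theorem mutInfo_ge_of_flip_le (P N' N : ℝ)
    (hN'0 : 0 ≤ N') (hN' : N' ≤ 1 / 2) (hN0 : 0 ≤ N) (hN : N ≤ 1 / 2)
    (p : Bool × Bool → ℝ) (hp : IsPMF p)
    (hX : ∑ b, p (true, b) = P)
    (hflip : ∑ z : Bool × Bool, (if z.2 = z.1 then 0 else p z) ≤ N') :
    hb P - hb (conv N N')
      ≤ mutInfo (fun xy : Bool × Bool =>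
          ∑ xa : Bool, p (xy.1, xa) * (if xy.2 = xa then 1 - N else N)) :=
  mutInfo_ge_of_flip_le_general P N' N hN' hN0 hN p hp hX hflip
end
end

section
/- Let X ~ Bernoulli(P) on {0,1}, let E₁ ~ Bernoulli(N') and E₂ ~ Bernoulli(N) be independent of X and of each other (0 < N', N < 1), and define the {0,1,e}-valued random variables X_a = e if E₁ = 1 and X_a = X otherwise, and Y = e if E₁ = 1 or E₂ = 1 and Y = X otherwise. Then H(X_a | Y) = N̄·h(N'/N̄) + N(1 − N')·h(P), where N̄ = N(1 − N') + N'. -/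
open scoped BigOperators

noncomputable section

/-! Writing `φ x = -x log₂ x`, the conditional entropy `H(X_a | Y)` is the sum over the values `y`
of `Y` of `∑ₐ φ(p(a, y)) − φ(p(y))`. For `y ≠ e` the column has a single nonzero entry, so its term
vanishes. The column `y = e` has entries `N'`, `P·m` and `(1−P)·m` with `m = N(1−N')`, and the
grouping identities `m·h(x) = φ(xm) + φ((1−x)m) − φ(m)` and
`(m + a)·h(a/(m + a)) = φ(a) + φ(m) − φ(m + a)`, both consequences of `φ(xy) = y·φ(x) + x·φ(y)`,
turn its term into the claimed expression. -/

def negMulLogb (b x : ℝ) : ℝ := -(x * Real.logb b x)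

lemma negMulLogb_eq_div (b x : ℝ) : negMulLogb b x = Real.negMulLog x / Real.log b := by
  simp only [negMulLogb, Real.negMulLog, Real.logb]; ring

@[simp]
lemma negMulLogb_zero (b : ℝ) : negMulLogb b 0 = 0 := by
  simp [negMulLogb]

lemma negMulLogb_mul (b x y : ℝ) :
    negMulLogb b (x * y) = y * negMulLogb b x + x * negMulLogb b y := by
  simp only [negMulLogb_eq_div, Real.negMulLog_mul]; ring

lemma negMulLogb_neg (b x : ℝ) : negMulLogb b (-x) = -negMulLogb b x := by
  have h := negMulLogb_mul b (-1) x
  simp only [negMulLogb, Real.logb_neg_eq_logb, Real.logb_one] at h ⊢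
  linarith

lemma hb_eq (x : ℝ) : hb x = negMulLogb 2 x + negMulLogb 2 (1 - x) := by
  rw [hb, negMulLogb, negMulLogb]; ring

lemma mul_hb (m x : ℝ) :
    m * hb x = negMulLogb 2 (x * m) + negMulLogb 2 ((1 - x) * m) - negMulLogb 2 m := by
  rw [hb_eq, negMulLogb_mul, negMulLogb_mul]; ring

lemma add_mul_hb_div (m a : ℝ) :
    (m + a) * hb (a / (m + a)) = negMulLogb 2 a + negMulLogb 2 m - negMulLogb 2 (m + a) := by
  rcases eq_or_ne (m + a) 0 with hs | hs
  · rw [hs, eq_neg_of_add_eq_zero_left hs, negMulLogb_neg]; simp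
  · rw [mul_hb, div_mul_cancel₀ a hs, sub_mul, div_mul_cancel₀ a hs, one_mul, add_sub_cancel_right]

lemma condEnt_eq_sum_sub {α β : Type} [Fintype α] [Fintype β] (p : α × β → ℝ) :
    condEnt p = ∑ b, ((∑ a, negMulLogb 2 (p (a, b))) - negMulLogb 2 (∑ a, p (a, b))) := by
  rw [condEnt, ent, ent, Fintype.sum_prod_type_right, ← Finset.sum_sub_distrib]; rfl

theorem condEnt_erasure_general (P N' N : ℝ) :
    condEnt (fun ay : Option Bool × Option Bool =>
        ∑ x : Bool, ∑ e1 : Bool, ∑ e2 : Bool,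
          bern P x * bern N' e1 * bern N e2 *
            ((if (if e1 then none else some x) = ay.1 then 1 else 0) *
             (if (if e1 || e2 then none else some x) = ay.2 then 1 else 0)))
      = (N * (1 - N') + N') * hb (N' / (N * (1 - N') + N'))
        + N * (1 - N') * hb P := by
  rw [condEnt_eq_sum_sub]
  simp only [Fintype.sum_option, Fintype.sum_bool, bern, if_true, if_false, Bool.false_or,
    Bool.true_or, reduceCtorEq, Option.some.injEq, mul_one, mul_zero, add_zero, zero_add,
    negMulLogb_zero, sub_self]
  rw [add_mul_hb_div, mul_hb]
  -- both sides are now the same combination of `negMulLogb 2` at polynomially equal arguments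
  ring_nf

/-- Let `X ∼ Bernoulli(P)` on `{0,1}`, and let `E₁ ∼ Bernoulli(N')`,
`E₂ ∼ Bernoulli(N)` (`0 < N', N < 1`) be independent of `X` and of each other.
With the erasure symbol `e = none`, set `X_a = e` if `E₁ = 1`, `X_a = X`
otherwise, and `Y = e` if `E₁ = 1` or `E₂ = 1`, `Y = X` otherwise.  Then
`H(X_a | Y) = N̄·h(N'/N̄) + N(1−N')·h(P)` where `N̄ = N(1−N') + N'`. -/
theorem condEnt_erasure (P N' N : ℝ)
    (hP0 : 0 ≤ P) (hP1 : P ≤ 1) (hN'0 : 0 < N') (hN'1 : N' < 1)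
    (hN0 : 0 < N) (hN1 : N < 1) :
    condEnt (fun ay : Option Bool × Option Bool =>
        ∑ x : Bool, ∑ e1 : Bool, ∑ e2 : Bool,
          bern P x * bern N' e1 * bern N e2 *
            ((if (if e1 then none else some x) = ay.1 then 1 else 0) *
             (if (if e1 || e2 then none else some x) = ay.2 then 1 else 0)))
      = (N * (1 - N') + N') * hb (N' / (N * (1 - N') + N'))
        + N * (1 - N') * hb P :=
  condEnt_erasure_general P N' N
end
end

section
/- (Varshamov bound) Let F be a finite field with q elements and let n ≥ k ≥ 1 and d ≥ 2 be integers. If Σ_{l=0}^{d−2} C(n−1, l)·(q − 1)^l < q^{n−k}, then there exists a k-dimensional linear subspace C of F^n such that every nonzero element of C has Hamming weight at least d; equivalently, C is a linear code of length n, dimension k, and minimum Hamming distance at least d. -/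
/-!
Gilbert–Varshamov construction of a parity-check matrix: choose its `n` columns in
`F^(n-k)` one at a time, each outside the set of linear combinations of fewer than `d - 1`
of the `j < n` earlier columns. That set is the image of a Hamming ball of radius `d - 2` in
`F^j`, of size `∑ C(j,l)(q-1)^l ≤ ∑ C(n-1,l)(q-1)^l < q^(n-k)`, so a choice always exists. Then no nonzero combination of fewer than `d`
columns vanishes, i.e. the kernel of the matrix has minimum weight at least `d`, and by
rank–nullity its dimension is at least `k`.
-/

open Finset

section Counting
variable {ι F : Type*} [Fintype ι] [DecidableEq ι] [Fintype F] [DecidableEq F] [Zero F]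

lemma card_filter_support_eq (s : Finset ι) :
    #{a : ι → F | ({i | a i ≠ 0} : Finset ι) = s} = (Fintype.card F - 1) ^ #s := by
  have hpi : ({a : ι → F | ({i | a i ≠ 0} : Finset ι) = s} : Finset _) =
      Fintype.piFinset fun i => if i ∈ s then univ.erase 0 else {0} := by
    ext a
    simp only [mem_filter, mem_univ, true_and, Fintype.mem_piFinset, Finset.ext_iff]
    refine forall_congr' fun i => ?_
    split_ifs with hi <;> simp [hi]
  rw [hpi, Fintype.card_piFinset]
  simp [apply_ite, prod_ite_mem]

lemma card_hammingNorm_eq (l : ℕ) :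
    #{a : ι → F | hammingNorm a = l} = (Fintype.card ι).choose l * (Fintype.card F - 1) ^ l := by
  rw [card_eq_sum_card_fiberwise (f := fun a : ι → F => ({i | a i ≠ 0} : Finset ι))
    (t := powersetCard l univ) (by simp [Set.MapsTo, hammingNorm])]
  rw [← card_univ, ← card_powersetCard, card_eq_sum_ones, sum_mul, one_mul]
  refine sum_congr rfl fun s hs => ?_
  rw [mem_powersetCard_univ] at hs
  rw [filter_filter, ← hs, ← card_filter_support_eq]
  congr 1
  exact filter_congr fun a _ => and_iff_right_of_imp fun h => by rw [hammingNorm, h]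

lemma card_hammingNorm_lt (r : ℕ) :
    #{a : ι → F | hammingNorm a < r} =
      ∑ l ∈ range r, (Fintype.card ι).choose l * (Fintype.card F - 1) ^ l := by
  rw [card_eq_sum_card_fiberwise (f := hammingNorm) (t := range r) (by simp [Set.MapsTo])]
  refine sum_congr rfl fun l hl => ?_
  rw [filter_filter, ← card_hammingNorm_eq]
  congr 1
  exact filter_congr fun a _ => and_iff_right_of_imp fun h => h ▸ mem_range.1 hl
end Counting

def MinWeightGE {ι F : Type*} [Fintype ι] [DecidableEq F] [Semiring F]
    (d : ℕ) (C : Submodule F (ι → F)) : Prop :=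
  ∀ v ∈ C, v ≠ 0 → d ≤ hammingNorm v

section
variable {F V : Type*} [Field F] [AddCommGroup V] [Module F V]

lemma linearCombination_snoc {j : ℕ} (c : Fin j → V) (v : V) (a : Fin j → F) (t : F) :
    Fintype.linearCombination F (Fin.snoc c v) (Fin.snoc a t : Fin (j + 1) → F) =
      Fintype.linearCombination F c a + t • v := by
  simp [Fintype.linearCombination_apply, Fin.sum_univ_castSucc]

variable [DecidableEq F]

lemma hammingNorm_snoc {j : ℕ} (a : Fin j → F) (t : F) :
    hammingNorm (Fin.snoc a t : Fin (j + 1) → F) = hammingNorm a + if t = 0 then 0 else 1 := by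
  simp [hammingNorm, card_filter, Fin.sum_univ_castSucc]

lemma minWeightGE_ker_linearCombination_snoc {d j : ℕ} {c : Fin j → V}
    (hc : MinWeightGE d (LinearMap.ker (Fintype.linearCombination F c))) {v : V}
    (hv : ∀ a : Fin j → F, hammingNorm a < d - 1 → Fintype.linearCombination F c a ≠ v) :
    MinWeightGE d (LinearMap.ker (Fintype.linearCombination F (Fin.snoc c v))) := by
  intro x hx hx0
  induction x using Fin.snocCases with | snoc a t => ?_
  rw [LinearMap.mem_ker, linearCombination_snoc] at hx
  rw [← hammingNorm_ne_zero_iff, hammingNorm_snoc] at hx0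
  rw [hammingNorm_snoc]
  by_cases ht : t = 0
  · rw [ht, zero_smul, add_zero] at hx
    simp only [ht, if_true, add_zero] at hx0 ⊢
    exact hc a hx (hammingNorm_ne_zero_iff.1 hx0)
  · -- otherwise `v = -t⁻¹ • ∑ aᵢ cᵢ` would be a combination of weight `< d - 1`
    by_contra! hlt
    simp only [ht, if_false] at hlt
    refine hv ((-t⁻¹) • a) ((hammingNorm_smul_le_hammingNorm).trans_lt (by omega)) ?_
    rw [map_smul, eq_neg_of_add_eq_zero_left hx, smul_neg, neg_smul, neg_neg, smul_smul,
      inv_mul_cancel₀ ht, one_smul]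

variable [Fintype F] [Fintype V]

lemma exists_minWeightGE_ker_linearCombination (d j : ℕ)
    (hvol : ∀ i < j, ∑ l ∈ range (d - 1), i.choose l * (Fintype.card F - 1) ^ l < Fintype.card V) :
    ∃ c : Fin j → V, MinWeightGE d (LinearMap.ker (Fintype.linearCombination F c)) := by
  classical
  induction j with
  | zero => exact ⟨0, fun x _ hx => absurd (Subsingleton.elim x 0) hx⟩
  | succ j ih =>
    obtain ⟨c, hc⟩ := ih fun i hi => hvol i (by omega)
    have hcard : #(image (Fintype.linearCombination F c) {a | hammingNorm a < d - 1}) < #univ :=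
      calc _ ≤ #{a : Fin j → F | hammingNorm a < d - 1} := card_image_le
        _ = ∑ l ∈ range (d - 1), j.choose l * (Fintype.card F - 1) ^ l := by
          rw [card_hammingNorm_lt, Fintype.card_fin]
        _ < #univ := hvol j j.lt_succ_self
    obtain ⟨v, -, hv⟩ := exists_mem_notMem_of_card_lt_card hcard
    exact ⟨Fin.snoc c v, minWeightGE_ker_linearCombination_snoc hc fun a ha hav =>
      hv (mem_image.2 ⟨a, by simpa using ha, hav⟩)⟩
end

section
variable {K V W : Type*} [DivisionRing K] [AddCommGroup V] [Module K V] [AddCommGroup W]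
  [Module K W]

lemma finrank_sub_finrank_le_finrank_ker [FiniteDimensional K V] [FiniteDimensional K W]
    (f : V →ₗ[K] W) :
    Module.finrank K V - Module.finrank K W ≤ Module.finrank K (LinearMap.ker f) := by
  have := f.finrank_range_add_finrank_ker
  have := (LinearMap.range f).finrank_le
  omega

lemma Submodule.exists_le_finrank_eq {U : Submodule K V} {k : ℕ} (hk : k ≤ Module.finrank K U) :
    ∃ C ≤ U, Module.finrank K C = k := by
  obtain ⟨f, hf⟩ := exists_linearIndependent_of_le_finrank hk
  refine ⟨(Submodule.span K (Set.range f)).map U.subtype, Submodule.map_subtype_le _ _, ?_⟩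
  rw [Submodule.finrank_map_subtype_eq, finrank_span_eq_card hf, Fintype.card_fin]
end

theorem varshamov_bound_general (F : Type) [Field F] [Fintype F] [DecidableEq F]
    (n k d : ℕ) (hkn : k ≤ n)
    (hvol : ∑ l ∈ Finset.range (d - 1),
        (n - 1).choose l * (Fintype.card F - 1) ^ l
      < Fintype.card F ^ (n - k)) :
    ∃ C : Submodule F (Fin n → F),
      Module.finrank F C = k ∧
      ∀ v ∈ C, v ≠ 0 → d ≤ hammingNorm v := by
  obtain ⟨c, hc⟩ := exists_minWeightGE_ker_linearCombination (V := Fin (n - k) → F) d n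
    fun i hi => calc
      _ ≤ ∑ l ∈ range (d - 1), (n - 1).choose l * (Fintype.card F - 1) ^ l :=
        sum_le_sum fun l _ => Nat.mul_le_mul_right _ (Nat.choose_le_choose l (by omega))
      _ < _ := by simpa using hvol
  have hker : k ≤ Module.finrank F (LinearMap.ker (Fintype.linearCombination F c)) := by
    have := finrank_sub_finrank_le_finrank_ker (Fintype.linearCombination F c)
    simp only [Module.finrank_fin_fun] at this
    omega
  obtain ⟨C, hCc, hCk⟩ := Submodule.exists_le_finrank_eq hker
  exact ⟨C, hCk, fun v hv => hc v (hCc hv)⟩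

/-- **Varshamov bound.** Let `F` be a finite field with `q` elements, and let
`n ≥ k ≥ 1` and `d ≥ 2`.  If `Σ_{l=0}^{d−2} C(n−1,l)·(q−1)^l < q^{n−k}`, then
there exists a `k`-dimensional linear subspace of `F^n` all of whose nonzero
elements have Hamming weight at least `d`; equivalently, a linear code of
length `n`, dimension `k`, and minimum Hamming distance at least `d`. -/
theorem varshamov_bound (F : Type) [Field F] [Fintype F] [DecidableEq F]
    (n k d : ℕ) (hk : 1 ≤ k) (hkn : k ≤ n) (hd : 2 ≤ d)
    (hvol : ∑ l ∈ Finset.range (d - 1),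
        (n - 1).choose l * (Fintype.card F - 1) ^ l
      < Fintype.card F ^ (n - k)) :
    ∃ C : Submodule F (Fin n → F),
      Module.finrank F C = k ∧
      ∀ v ∈ C, v ≠ 0 → d ≤ hammingNorm v :=
  varshamov_bound_general F n k d hkn hvol
end
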